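/- Let A : Fin m → Fin n → ℤ and B : Fin m → Fin k → ℤ (m, n, k ≥ 1). Then for every starting vector x₀ : Fin n → ℤ the alternating method terminates after finitely many steps: there exists r ∈ ℕ such that either ψ^[r+1](x₀) = ψ^[r](x₀), or (ψ^[r+1](x₀)) j < x₀ j for all j ∈ Fin n. -/

import Mathlib

open Finset

/-- Max-plus product over ℤ: `(M ⊗ x) i = max_l (M i l + x l)`. -/
noncomputable def mpZ {p q : ℕ} [NeZero p] [NeZero q]
    (M : Fin p → Fin q → ℤ) (x : Fin q → ℤ) : Fin p → ℤ :=
  fun i => univ.sup' univ_nonempty fun l => M i l + x l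

/-- First half-step of the alternating method:
`g(x) l = min_i ( -B i l + (A ⊗ x) i )`. -/
noncomputable def gZ {m n k : ℕ} [NeZero m] [NeZero n] [NeZero k]
    (A : Fin m → Fin n → ℤ) (B : Fin m → Fin k → ℤ) (x : Fin n → ℤ) : Fin k → ℤ :=
  fun l => univ.inf' univ_nonempty fun i => -B i l + mpZ A x i

/-- One full iteration of the alternating method:
`ψ(x) j = min_i ( -A i j + (B ⊗ g(x)) i )`. -/
noncomputable def psiZ {m n k : ℕ} [NeZero m] [NeZero n] [NeZero k]
    (A : Fin m → Fin n → ℤ) (B : Fin m → Fin k → ℤ) (x : Fin n → ℤ) : Fin n → ℤ :=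
  fun j => univ.inf' univ_nonempty fun i => -A i j + mpZ B (gZ A B x) i

/-!
The map `x ↦ M ⊗ x` has a residual `y ↦ max {x | M ⊗ x ≤ y}`, and both halves of the alternating
method are compositions of products with residuals. The Galois connection gives `ψ (ψ x) ≤ ψ x`, so
from the first step on the orbit is antitone, and strictly so unless it reaches a fixed point.
The residual also has bounded spread: its entries differ by at most a constant depending on `A`.
A strictly decreasing sequence of integer vectors of bounded spread has coordinate sums tending to
`-∞`, so eventually it lies entirely below any given vector, in particular below `x₀`.
-/

/-- The residual of the max-plus product: `mpResZ M y` is the greatest `x` with `M ⊗ x ≤ y`.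
`gZ` and `psiZ` unfold definitionally to `mpResZ B (mpZ A x)` and `mpResZ A (mpZ B (gZ A B x))`. -/
noncomputable def mpResZ {p q : ℕ} [NeZero p] [NeZero q]
    (M : Fin p → Fin q → ℤ) (y : Fin p → ℤ) : Fin q → ℤ :=
  fun l => univ.inf' univ_nonempty fun i => -M i l + y i

section Residuation

variable {p q : ℕ} [NeZero p] [NeZero q] (M : Fin p → Fin q → ℤ)

theorem gc_mpZ_mpResZ : GaloisConnection (mpZ M) (mpResZ M) := by
  intro x y
  simp only [Pi.le_def, mpZ, mpResZ, Finset.sup'_le_iff, Finset.le_inf'_iff, mem_univ,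
    forall_const]
  constructor <;> intro h a b <;> linarith [h b a]

theorem mpResZ_le_add_of_forall_sub_le {K : ℤ} (hK : ∀ i j j', M i j' - M i j ≤ K)
    (y : Fin p → ℤ) (j j' : Fin q) : mpResZ M y j ≤ mpResZ M y j' + K := by
  obtain ⟨i, -, hi⟩ := Finset.exists_mem_eq_inf' univ_nonempty fun i => -M i j' + y i
  have hj : mpResZ M y j ≤ -M i j + y i := Finset.inf'_le _ (mem_univ i)
  have hj' : mpResZ M y j' = -M i j' + y i := hi
  linarith [hK i j j']

end Residuation

section AlternatingMethod

variable {m n k : ℕ} [NeZero m] [NeZero n] [NeZero k]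
  (A : Fin m → Fin n → ℤ) (B : Fin m → Fin k → ℤ)

theorem psiZ_psiZ_le (x : Fin n → ℤ) : psiZ A B (psiZ A B x) ≤ psiZ A B x := by
  have gcA := gc_mpZ_mpResZ A
  have hA : mpZ A (psiZ A B x) ≤ mpZ B (gZ A B x) := gcA.l_u_le _
  have hB : mpZ B (gZ A B (psiZ A B x)) ≤ mpZ B (gZ A B x) :=
    ((gc_mpZ_mpResZ B).l_u_le _).trans hA
  exact gcA.monotone_u hB

theorem exists_psiZ_le_add : ∃ K : ℤ, ∀ x j j', psiZ A B x j ≤ psiZ A B x j' + K := by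
  obtain ⟨K, hK⟩ := Finite.exists_le fun p : Fin m × Fin n × Fin n => A p.1 p.2.2 - A p.1 p.2.1
  exact ⟨K, fun x => mpResZ_le_add_of_forall_sub_le A (fun i j j' => hK (i, j, j')) _⟩

end AlternatingMethod

theorem exists_forall_lt_of_strictAnti {ι : Type*} [Fintype ι] {X : ℕ → ι → ℤ}
    (hX : StrictAnti X) {K : ℤ} (hK : ∀ r i j, X r i ≤ X r j + K) (y : ι → ℤ) :
    ∃ r, ∀ j, X r j < y j := by
  by_contra! h
  obtain ⟨c, hc⟩ := Finite.exists_ge y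
  have hlow : ∀ r j, c - K ≤ X r j := fun r j => by
    obtain ⟨i, hi⟩ := h r
    linarith [hc i, hK r i j]
  exact (Fintype.sum_strictMono.comp_strictAnti hX).not_bddBelow_range_of_isPredArchimedean
    ⟨Fintype.card ι • (c - K), by
      rintro _ ⟨r, rfl⟩
      exact Finset.card_nsmul_le_sum _ _ _ fun j _ => hlow r j⟩

theorem stmt13 {m n k : ℕ} [NeZero m] [NeZero n] [NeZero k]
    (A : Fin m → Fin n → ℤ) (B : Fin m → Fin k → ℤ) (x₀ : Fin n → ℤ) :
    ∃ r : ℕ, (psiZ A B)^[r + 1] x₀ = (psiZ A B)^[r] x₀ ∨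
      ∀ j : Fin n, ((psiZ A B)^[r + 1] x₀) j < x₀ j := by
  by_cases hfix : ∃ r : ℕ, (psiZ A B)^[r + 1] x₀ = (psiZ A B)^[r] x₀
  · exact hfix.imp fun r hr => Or.inl hr
  push Not at hfix
  have hanti : StrictAnti fun r => (psiZ A B)^[r + 1] x₀ := by
    refine strictAnti_nat_of_succ_lt fun r => lt_of_le_of_ne ?_ (hfix (r + 1))
    rw [Function.iterate_succ_apply', Function.iterate_succ_apply']
    exact psiZ_psiZ_le A B _
  obtain ⟨K, hK⟩ := exists_psiZ_le_add A B
  obtain ⟨r, hr⟩ := exists_forall_lt_of_strictAnti hanti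
    (fun r => by simpa only [Function.iterate_succ_apply'] using hK _) x₀
  exact ⟨r, Or.inr hr⟩
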